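/- If γ ~ Θ(a+1, δ) on the unit disk (a > 0, Re δ > -1/2), then γ^ι = -γ(1-γ̄)/(1-γ) has distribution Θ(ã+1, δ̃) with ã = a + 4 Re δ + 2 and δ̃ = -(1+δ); moreover ã > 0 and ã/2 + Re δ̃ > -1/2. -/

import Mathlib

open Complex MeasureTheory Real

/-- The involution `γ ↦ γ^ι = -γ(1-γ̄)/(1-γ)`. -/
noncomputable def diskIota (γ : ℂ) : ℂ := -γ * (1 - starRingEnd ℂ γ) / (1 - γ)

/-- The distribution `Θ(a+1,δ)` on the open unit disk, with density
`c_{a,δ}(1-|z|²)^{a/2-1}(1-z)^{δ̄}(1-z̄)^δ` with respect to Lebesgue measure. -/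
noncomputable def thetaDisk (a : ℝ) (δ : ℂ) : Measure ℂ :=
  (volume.restrict (Metric.ball (0 : ℂ) 1)).withDensity fun z =>
    ENNReal.ofReal
      (((Complex.Gamma (a / 2 + 1 + δ) * Complex.Gamma (a / 2 + 1 + starRingEnd ℂ δ) /
          ((π : ℂ) * Complex.Gamma (a / 2) * Complex.Gamma (a / 2 + 1 + δ + starRingEnd ℂ δ))) *
        ((1 - z) ^ (starRingEnd ℂ δ)) * ((1 - starRingEnd ℂ z) ^ δ)).re *
        (1 - ‖z‖ ^ 2) ^ (a / 2 - 1))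

/-!
The map `ι` is an involution of the unit disk preserving `|z|`, with
`1 - ι z = (1 - |z|²) / (1 - z)` and real Jacobian `(1 - |z|²) / |1 - z|²` (it is of the form
`h ↦ α h + β h̄`, whose determinant is `|α|² - |β|²`). Substituting these into the density of
`Θ(ã+1, δ̃)` at `ι z`, the powers of `1 - z`, `1 - z̄` and `1 - |z|²` recombine into the density of
`Θ(a+1, δ)`, and the normalising constants agree because `ã, δ̃` merely permute the arguments of
the Gamma factors. The change of variables formula then identifies the two measures.
-/

open Set Metric ComplexConjugate

section ChangeOfVariables

variable {E : Type*} [NormedAddCommGroup E] [NormedSpace ℝ E] [FiniteDimensional ℝ E]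
  [MeasurableSpace E] [BorelSpace E] (μ : Measure E) [μ.IsAddHaarMeasure]

theorem map_withDensity_restrict_eq_of_invOn {s : Set E} (hs : MeasurableSet s) {f : E → E}
    {f' : E → E →L[ℝ] E} (hf : Measurable f) (hf' : ∀ x ∈ s, HasFDerivWithinAt f (f' x) s x)
    (hinv : InvOn f f s s) (hmaps : MapsTo f s s) {g h : E → ENNReal}
    (hgh : ∀ x ∈ s, ENNReal.ofReal |(f' x).det| * g (f x) = h x) :
    ((μ.restrict s).withDensity h).map f = (μ.restrict s).withDensity g := by
  have hbij : BijOn f s s := hinv.bijOn hmaps hmaps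
  ext t ht
  have hpre : MeasurableSet (f ⁻¹' t ∩ s) := (hf ht).inter hs
  have himage : t ∩ s = f '' (f ⁻¹' t ∩ s) := by rw [image_preimage_inter, hbij.image_eq]
  rw [Measure.map_apply hf ht, withDensity_apply _ (hf ht), withDensity_apply _ ht,
    Measure.restrict_restrict (hf ht), Measure.restrict_restrict ht, himage,
    lintegral_image_eq_lintegral_abs_det_fderiv_mul μ hpre
      (fun x hx => (hf' x hx.2).mono inter_subset_right) (hbij.injOn.mono inter_subset_right)]
  exact setLIntegral_congr_fun hpre fun x hx => (hgh x hx.2).symm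

end ChangeOfVariables

namespace Complex

theorem det_smul_id_add_smul_conjCLE (α β : ℂ) :
    (α • ContinuousLinearMap.id ℝ ℂ + β • (conjCLE : ℂ →L[ℝ] ℂ)).det = normSq α - normSq β := by
  rw [ContinuousLinearMap.det, ← LinearMap.det_toMatrix basisOneI, Matrix.det_fin_two]
  simp [LinearMap.toMatrix_apply, normSq_apply]
  ring

theorem ofReal_mul_cpow {r : ℝ} (hr : 0 < r) {x : ℂ} (hx : x ≠ 0) (s : ℂ) :
    ((r : ℂ) * x) ^ s = (r : ℂ) ^ s * x ^ s := by
  have hr' : (r : ℂ) ≠ 0 := ofReal_ne_zero.mpr hr.ne'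
  rw [cpow_def_of_ne_zero (mul_ne_zero hr' hx), cpow_def_of_ne_zero hr', cpow_def_of_ne_zero hx,
    log_ofReal_mul hr hx, add_mul, exp_add, ofReal_log hr.le]

theorem ofReal_div_cpow_neg_one_add {r : ℝ} (hr : 0 < r) {u : ℂ} (hu : 0 < u.re) (s : ℂ) :
    ((r : ℂ) / u) ^ (-(1 + s)) = (r : ℂ) ^ (-(1 + s)) * (u * u ^ s) := by
  have hu₀ : u ≠ 0 := fun h => by simp [h] at hu
  have harg : u.arg ≠ π := fun h => by linarith [(arg_eq_pi_iff.mp h).1]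
  rw [div_eq_mul_inv, ofReal_mul_cpow hr (inv_ne_zero hu₀), inv_cpow _ _ harg, cpow_neg u, inv_inv,
    cpow_add _ _ hu₀, cpow_one]

theorem conj_eq_two_re_sub (δ : ℂ) : conj δ = 2 * δ.re - δ := by
  have h := add_conj δ
  push_cast at h
  linear_combination h

end Complex

section DiskIota

variable {z : ℂ}

theorem one_sub_diskIota (hz : z ≠ 1) :
    1 - diskIota z = ((1 - ‖z‖ ^ 2 : ℝ) : ℂ) / (1 - z) := by
  have hu : 1 - z ≠ 0 := sub_ne_zero.mpr hz.symm
  rw [eq_div_iff hu, diskIota, ofReal_sub, ofReal_one, ofReal_pow, ← mul_conj', mul_comm]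
  field_simp
  ring

theorem one_sub_conj_diskIota (hz : z ≠ 1) :
    1 - conj (diskIota z) = ((1 - ‖z‖ ^ 2 : ℝ) : ℂ) / (1 - conj z) := by
  simpa using congrArg conj (one_sub_diskIota hz)

theorem norm_diskIota (hz : z ≠ 1) : ‖diskIota z‖ = ‖z‖ := by
  have hu : ‖1 - z‖ ≠ 0 := norm_ne_zero_iff.mpr (sub_ne_zero.mpr hz.symm)
  have hc : 1 - conj z = conj (1 - z) := by simp
  rw [diskIota, norm_div, norm_mul, norm_neg, hc, norm_conj,
    mul_div_assoc, div_self hu, mul_one]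

theorem diskIota_diskIota (hz : ‖z‖ ≠ 1) : diskIota (diskIota z) = z := by
  have hz₁ : z ≠ 1 := fun h => hz (by simp [h])
  have hr : ((1 - ‖z‖ ^ 2 : ℝ) : ℂ) ≠ 0 := by
    rw [ofReal_ne_zero, sub_ne_zero]; exact fun h => hz (by nlinarith [norm_nonneg z])
  have hu : 1 - z ≠ 0 := sub_ne_zero.mpr hz₁.symm
  have hv : 1 - conj z ≠ 0 := by
    rw [show 1 - conj z = conj (1 - z) by simp]; exact (map_ne_zero _).mpr hu
  have hι : diskIota (diskIota z) = -diskIota z * (1 - conj (diskIota z)) / (1 - diskIota z) := rfl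
  rw [hι, one_sub_diskIota hz₁, one_sub_conj_diskIota hz₁, diskIota]
  field_simp

theorem hasFDerivAt_diskIota (hz : z ≠ 1) :
    HasFDerivAt diskIota ((-(1 - conj z) / (1 - z) ^ 2) • ContinuousLinearMap.id ℝ ℂ +
      (z / (1 - z)) • (conjCLE : ℂ →L[ℝ] ℂ)) z := by
  have hu : 1 - z ≠ 0 := sub_ne_zero.mpr hz.symm
  have hconj : HasFDerivAt (fun w : ℂ => conj w) (conjCLE : ℂ →L[ℝ] ℂ) z := conjCLE.hasFDerivAt
  have hnum := ((hasFDerivAt_id (𝕜 := ℝ) z).neg).mul (hconj.const_sub 1)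
  have hden := (hasFDerivAt_inv' (𝕜 := ℝ) hu).comp z ((hasFDerivAt_id z).const_sub 1)
  have hfun : diskIota = fun w : ℂ => -w * (1 - conj w) * (1 - w)⁻¹ := by
    funext w; simp [diskIota, div_eq_mul_inv]
  have hprod : HasFDerivAt (fun w : ℂ => -w * (1 - conj w) * (1 - w)⁻¹) _ z := hnum.mul hden
  rw [hfun]
  convert hprod using 1
  ext h
  simp
  field_simp
  ring

theorem det_fderiv_diskIota (hz : z ≠ 1) :
    (fderiv ℝ diskIota z).det = (1 - ‖z‖ ^ 2) / normSq (1 - z) := by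
  have hu : 1 - z ≠ 0 := sub_ne_zero.mpr hz.symm
  have hN : normSq (1 - z) ≠ 0 := normSq_eq_zero.not.mpr hu
  have hv : normSq (1 - conj z) = normSq (1 - z) := by
    rw [show 1 - conj z = conj (1 - z) by simp, normSq_conj]
  rw [(hasFDerivAt_diskIota hz).fderiv, det_smul_id_add_smul_conjCLE, normSq_div, normSq_div,
    normSq_neg, hv, map_pow, ← Complex.sq_norm z]
  field_simp

theorem one_sub_diskIota_cpow_mul (δ : ℂ) (hz : ‖z‖ < 1) :
    (1 - diskIota z) ^ conj (-(1 + δ)) * (1 - conj (diskIota z)) ^ (-(1 + δ)) =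
      ((normSq (1 - z) * (1 - ‖z‖ ^ 2) ^ (-2 - 2 * δ.re) : ℝ) : ℂ) *
        ((1 - z) ^ conj δ * (1 - conj z) ^ δ) := by
  have hz₁ : z ≠ 1 := fun h => by simp [h] at hz
  have hr : 0 < 1 - ‖z‖ ^ 2 := by nlinarith [norm_nonneg z]
  -- `0 < re (1 - z)` keeps `1 - z` off the branch cut, so the principal powers split.
  have hre : 0 < (1 - z).re := by simpa using (re_le_norm z).trans_lt hz
  have hre' : 0 < (1 - conj z).re := by simpa using hre
  have hrr : ((1 - ‖z‖ ^ 2 : ℝ) : ℂ) ^ (-(1 + conj δ)) * ((1 - ‖z‖ ^ 2 : ℝ) : ℂ) ^ (-(1 + δ)) =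
      (((1 - ‖z‖ ^ 2) ^ (-2 - 2 * δ.re) : ℝ) : ℂ) := by
    rw [← cpow_add _ _ (ofReal_ne_zero.mpr hr.ne'), ofReal_cpow hr.le, conj_eq_two_re_sub]
    congr 1
    push_cast
    ring
  have huu : (1 - z) * (1 - conj z) = (normSq (1 - z) : ℂ) := by
    rw [← mul_conj]; simp
  rw [one_sub_diskIota hz₁, one_sub_conj_diskIota hz₁, map_neg, map_add, map_one,
    ofReal_div_cpow_neg_one_add hr hre, ofReal_div_cpow_neg_one_add hr hre', ofReal_mul]
  linear_combination ((1 - z) * (1 - conj z) * ((1 - z) ^ conj δ * (1 - conj z) ^ δ)) * hrr +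
    (((1 - ‖z‖ ^ 2) ^ (-2 - 2 * δ.re) : ℝ) : ℂ) * ((1 - z) ^ conj δ * (1 - conj z) ^ δ) * huu

theorem mapsTo_diskIota_ball : MapsTo diskIota (ball 0 1) (ball 0 1) := fun z hz => by
  rw [mem_ball_zero_iff] at hz ⊢
  rwa [norm_diskIota fun h => by simp [h] at hz]

theorem invOn_diskIota_ball : InvOn diskIota diskIota (ball 0 1) (ball 0 1) := by
  have h : LeftInvOn diskIota diskIota (ball 0 1) := fun z hz =>
    diskIota_diskIota (mem_ball_zero_iff.mp hz).ne
  exact ⟨h, h⟩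

end DiskIota

noncomputable def thetaConst (a : ℝ) (δ : ℂ) : ℂ :=
  Complex.Gamma (a / 2 + 1 + δ) * Complex.Gamma (a / 2 + 1 + conj δ) /
    ((π : ℂ) * Complex.Gamma (a / 2) * Complex.Gamma (a / 2 + 1 + δ + conj δ))

noncomputable def thetaDensity (a : ℝ) (δ : ℂ) (z : ℂ) : ℝ :=
  (thetaConst a δ * (1 - z) ^ conj δ * (1 - conj z) ^ δ).re * (1 - ‖z‖ ^ 2) ^ (a / 2 - 1)

theorem thetaDisk_eq_withDensity (a : ℝ) (δ : ℂ) :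
    thetaDisk a δ = (volume.restrict (ball 0 1)).withDensity
      fun z => ENNReal.ofReal (thetaDensity a δ z) := rfl

theorem thetaConst_dual (a : ℝ) (δ : ℂ) :
    thetaConst (a + 4 * δ.re + 2) (-(1 + δ)) = thetaConst a δ := by
  have hc := conj_eq_two_re_sub δ
  have e₁ : ((a + 4 * δ.re + 2 : ℝ) : ℂ) / 2 + 1 + -(1 + δ) = a / 2 + 1 + conj δ := by
    rw [hc]; push_cast; ring
  have e₂ : ((a + 4 * δ.re + 2 : ℝ) : ℂ) / 2 + 1 + conj (-(1 + δ)) = a / 2 + 1 + δ := by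
    simp only [map_neg, map_add, map_one, hc]; push_cast; ring
  have e₃ : ((a + 4 * δ.re + 2 : ℝ) : ℂ) / 2 = a / 2 + 1 + δ + conj δ := by
    rw [hc]; push_cast; ring
  have e₄ : ((a + 4 * δ.re + 2 : ℝ) : ℂ) / 2 + 1 + -(1 + δ) + conj (-(1 + δ)) = a / 2 := by
    simp only [map_neg, map_add, map_one, hc]; push_cast; ring
  rw [thetaConst, thetaConst, e₄, e₁, e₂, e₃]
  ring

theorem abs_det_fderiv_diskIota_mul_thetaDensity (a : ℝ) (δ : ℂ) {z : ℂ} (hz : ‖z‖ < 1) :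
    |(fderiv ℝ diskIota z).det| * thetaDensity (a + 4 * δ.re + 2) (-(1 + δ)) (diskIota z) =
      thetaDensity a δ z := by
  have hz₁ : z ≠ 1 := fun h => by simp [h] at hz
  have hr : 0 < 1 - ‖z‖ ^ 2 := by nlinarith [norm_nonneg z]
  have hN : 0 < normSq (1 - z) := normSq_pos.mpr (sub_ne_zero.mpr hz₁.symm)
  have hpow : (1 - ‖z‖ ^ 2) ^ (-2 - 2 * δ.re) * (1 - ‖z‖ ^ 2) ^ ((a + 4 * δ.re + 2) / 2 - 1) *
      (1 - ‖z‖ ^ 2) = (1 - ‖z‖ ^ 2) ^ (a / 2 - 1) := by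
    rw [← Real.rpow_add hr, ← Real.rpow_add_one hr.ne']
    ring_nf
  rw [thetaDensity, thetaDensity, mul_assoc (thetaConst _ _), one_sub_diskIota_cpow_mul δ hz,
    thetaConst_dual, mul_left_comm (thetaConst a δ), re_ofReal_mul, norm_diskIota hz₁,
    det_fderiv_diskIota hz₁, abs_of_pos (div_pos hr hN), ← hpow, mul_assoc (thetaConst a δ)]
  field_simp

/-- if `γ ~ Θ(a+1,δ)` then `γ^ι ~ Θ(ã+1, δ̃)` with
`ã = a + 4 Re δ + 2` and `δ̃ = -(1+δ)`; moreover `ã > 0` and `ã/2 + Re δ̃ > -1/2`. -/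
theorem thetaDisk_map_iota (a : ℝ) (δ : ℂ) (ha : 0 < a) (hδ : -(1 / 2) < δ.re) :
    (thetaDisk a δ).map diskIota = thetaDisk (a + 4 * δ.re + 2) (-(1 + δ)) ∧
    0 < a + 4 * δ.re + 2 ∧
    -(1 / 2) < (a + 4 * δ.re + 2) / 2 + (-(1 + δ)).re := by
  refine ⟨?_, by linarith, by simp only [neg_re, add_re, one_re]; linarith⟩
  rw [thetaDisk_eq_withDensity, thetaDisk_eq_withDensity]
  refine map_withDensity_restrict_eq_of_invOn volume measurableSet_ball (f' := fderiv ℝ diskIota)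
    (by unfold diskIota; fun_prop)
    (fun z hz => ?_) invOn_diskIota_ball mapsTo_diskIota_ball fun z hz => ?_
  · have hz₁ : z ≠ 1 := fun h => by simp [h] at hz
    exact (hasFDerivAt_diskIota hz₁).differentiableAt.hasFDerivAt.hasFDerivWithinAt
  · rw [← ENNReal.ofReal_mul (abs_nonneg _),
      abs_det_fderiv_diskIota_mul_thetaDensity a δ (mem_ball_zero_iff.mp hz)]
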